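/- Let f : R^n → R be C^1 with L-Lipschitz gradient, Ω ⊆ R^n closed convex, x_k ∈ Ω, and suppose the polling set D_k is a Λ-PSS for B(x_k, α_k) ∩ Ω with ‖d‖ ≤ d_max·α_k for all d ∈ D_k. If π(x_k) ≠ 0 and α_k < min(2π(x_k)/((L·d_max² + σ)·Λ), 1), then there exists d ∈ D_k with x_k + d ∈ Ω and f(x_k + d) < f(x_k) − (σ/2)·α_k². -/

import Mathlib

/-!
Pick a feasible `v` with `‖v‖ ≤ 1` and `⟪∇f x, v⟫ < -α (L dmax² + σ) Λ / 2`, possible since this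
bound is below `π(x)`. By convexity `α • v` is a feasible step in `B(x, α)`, so it is a nonnegative
combination of the poll directions with weights summing to at most `Λ`; hence some poll direction
`d` has `Λ ⟪∇f x, d⟫ ≤ α ⟪∇f x, v⟫`, i.e. slope below `-α² (L dmax² + σ) / 2`. The descent lemma
`f (x + d) ≤ f x + ⟪∇f x, d⟫ + L ‖d‖² / 2` with `‖d‖ ≤ dmax α` leaves a decrease of `σ α² / 2`.
-/

open RealInnerProductSpace Set

section Descent

variable {E : Type*} [NormedAddCommGroup E] [InnerProductSpace ℝ E] [CompleteSpace E]

theorem hasDerivAt_comp_add_smul {f : E → ℝ} {x u : E} {t : ℝ}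
    (hf : DifferentiableAt ℝ f (x + t • u)) :
    HasDerivAt (fun s : ℝ => f (x + s • u)) ⟪gradient f (x + t • u), u⟫ t := by
  have hline : HasDerivAt (fun s : ℝ => x + s • u) u t := by
    simpa using ((hasDerivAt_id t).smul_const u).const_add x
  rw [inner_gradient_left]
  exact hf.hasFDerivAt.comp_hasDerivAt t hline

/-- The descent lemma. On `[0, 1]`, the slope of `t ↦ f (x + t • u)` exceeds that of its linear
model by at most `L * t * ‖u‖ ^ 2`, which is the slope of the quadratic correction. -/
theorem le_add_inner_gradient_add_sq_of_lipschitz {f : E → ℝ} {L : ℝ} (hf : Differentiable ℝ f)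
    (hlip : ∀ y z : E, ‖gradient f y - gradient f z‖ ≤ L * ‖y - z‖) (x u : E) :
    f (x + u) ≤ f x + ⟪gradient f x, u⟫ + L / 2 * ‖u‖ ^ 2 := by
  have hφ (t : ℝ) := hasDerivAt_comp_add_smul (u := u) (t := t) (hf (x + t • u))
  have hB (t : ℝ) : HasDerivAt (fun s : ℝ => f x + s * ⟪gradient f x, u⟫ + L / 2 * ‖u‖ ^ 2 * s ^ 2)
      (⟪gradient f x, u⟫ + L * ‖u‖ ^ 2 * t) t := by
    refine ((((hasDerivAt_id' t).mul_const ⟪gradient f x, u⟫).const_add (f x)).add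
      ((hasDerivAt_pow 2 t).const_mul (L / 2 * ‖u‖ ^ 2))).congr_deriv ?_
    push_cast
    ring
  have hbound (t : ℝ) (ht : t ∈ Ico (0 : ℝ) 1) :
      ⟪gradient f (x + t • u), u⟫ ≤ ⟪gradient f x, u⟫ + L * ‖u‖ ^ 2 * t := by
    have := calc ⟪gradient f (x + t • u) - gradient f x, u⟫
        _ ≤ ‖gradient f (x + t • u) - gradient f x‖ * ‖u‖ := real_inner_le_norm _ _
        _ ≤ L * ‖x + t • u - x‖ * ‖u‖ := by gcongr; exact hlip _ _
        _ = L * ‖u‖ ^ 2 * t := by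
          rw [add_sub_cancel_left, norm_smul, Real.norm_of_nonneg ht.1]; ring
    rw [inner_sub_left] at this
    linarith
  have := image_le_of_deriv_right_le_deriv_boundary
    (fun t _ => (hφ t).continuousAt.continuousWithinAt) (fun t _ => (hφ t).hasDerivWithinAt)
    (by simp) (fun t _ => (hB t).continuousAt.continuousWithinAt)
    (fun t _ => (hB t).hasDerivWithinAt) hbound (right_mem_Icc.2 zero_le_one)
  simpa using this

end Descent

section Criticality

variable {E : Type*} [NormedAddCommGroup E] [InnerProductSpace ℝ E]

/-- The criticality measure `π(x)` of the paper, with `g` standing for `∇f(x)`. -/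
noncomputable def criticality (Ω : Set E) (x g : E) : ℝ :=
  |sInf {r : ℝ | ∃ v : E, x + v ∈ Ω ∧ ‖v‖ ≤ 1 ∧ r = ⟪g, v⟫}|

theorem exists_inner_lt_neg_of_lt_criticality {Ω : Set E} {x g : E} {ε : ℝ} (hx : x ∈ Ω)
    (hε : ε < criticality Ω x g) : ∃ v, x + v ∈ Ω ∧ ‖v‖ ≤ 1 ∧ ⟪g, v⟫ < -ε := by
  set S := {r : ℝ | ∃ v : E, x + v ∈ Ω ∧ ‖v‖ ≤ 1 ∧ r = ⟪g, v⟫}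
  have h0S : (0 : ℝ) ∈ S := ⟨0, by simpa using hx, by simp, by simp⟩
  have hbdd : BddBelow S := by
    refine ⟨-‖g‖, ?_⟩
    rintro _ ⟨v, -, hv, rfl⟩
    nlinarith [neg_abs_le ⟪g, v⟫, abs_real_inner_le_norm g v, norm_nonneg g]
  have hlt : sInf S < -ε := by
    have hcrit : criticality Ω x g = -sInf S := abs_of_nonpos (csInf_le hbdd h0S)
    linarith
  obtain ⟨_, ⟨v, hv, hv1, rfl⟩, hvε⟩ := (csInf_lt_iff hbdd ⟨0, h0S⟩).1 hlt
  exact ⟨v, hv, hv1, hvε⟩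

end Criticality

theorem exists_mul_le_sum_mul_of_sum_mul_neg {ι K : Type*} [Fintype ι] [Field K] [LinearOrder K]
    [IsStrictOrderedRing K] {c a : ι → K} {Λ : K} (hc : ∀ i, 0 ≤ c i) (hcΛ : ∑ i, c i ≤ Λ)
    (hneg : ∑ i, c i * a i < 0) : ∃ i, Λ * a i ≤ ∑ i, c i * a i := by
  set N := ∑ i, c i * a i
  by_contra! h
  obtain ⟨j, -, hj⟩ := Finset.exists_ne_zero_of_sum_ne_zero hneg.ne
  have hcj : 0 < c j := (hc j).lt_of_ne (left_ne_zero_of_mul hj).symm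
  have hlt : ∑ i, c i * N < ∑ i, c i * (Λ * a i) :=
    Finset.sum_lt_sum (fun i _ => mul_le_mul_of_nonneg_left (h i).le (hc i))
      ⟨j, Finset.mem_univ j, mul_lt_mul_of_pos_left (h j) hcj⟩
  have hle : N * Λ ≤ N * ∑ i, c i := mul_le_mul_of_nonpos_left hcΛ hneg.le
  have hΛN : ∑ i, c i * (Λ * a i) = Λ * N := by
    rw [Finset.mul_sum]; exact Finset.sum_congr rfl fun i _ => by ring
  rw [← Finset.sum_mul, hΛN] at hlt
  linarith [mul_comm N Λ, mul_comm N (∑ i, c i)]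

section Polling

variable {E ι : Type*} [NormedAddCommGroup E] [InnerProductSpace ℝ E] [Fintype ι]

theorem exists_inner_le_of_spans_feasible_ball {Ω : Set E} (hconv : Convex ℝ Ω) {x : E}
    (hx : x ∈ Ω) {α Λ : ℝ} (hα : 0 < α) (hα1 : α ≤ 1) {d : ι → E}
    (hPSS : ∀ v : E, x + v ∈ Ω → ‖v‖ ≤ α →
      ∃ c : ι → ℝ, (∀ i, 0 ≤ c i) ∧ v = ∑ i, c i • d i ∧ ∑ i, c i ≤ Λ)
    {g v : E} (hv : x + v ∈ Ω) (hv1 : ‖v‖ ≤ 1) (hgv : ⟪g, v⟫ < 0) :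
    ∃ i, Λ * ⟪g, d i⟫ ≤ α * ⟪g, v⟫ := by
  have hαv : ‖α • v‖ ≤ α := by
    rw [norm_smul, Real.norm_of_nonneg hα.le]
    exact mul_le_of_le_one_right hα.le hv1
  obtain ⟨c, hc, hcomb, hcΛ⟩ := hPSS (α • v) (hconv.add_smul_mem hx hv ⟨hα.le, hα1⟩) hαv
  have hsum : α * ⟪g, v⟫ = ∑ i, c i * ⟪g, d i⟫ := by
    simp only [← real_inner_smul_right, hcomb, inner_sum]
  rw [hsum]
  exact exists_mul_le_sum_mul_of_sum_mul_neg hc hcΛ (hsum ▸ mul_neg_of_pos_of_neg hα hgv)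

end Polling

theorem lambda_pss_success_constrained_general (n p : ℕ)
    (Ω : Set (EuclideanSpace ℝ (Fin n))) (hconv : Convex ℝ Ω)
    (f : EuclideanSpace ℝ (Fin n) → ℝ) (L σ Λ dmax α : ℝ)
    (hL : 0 < L) (hσ : 0 < σ) (hΛ : 0 < Λ) (hα : 0 < α)
    (hf : ContDiff ℝ 1 f)
    (hlip : ∀ y z : EuclideanSpace ℝ (Fin n),
      ‖gradient f y - gradient f z‖ ≤ L * ‖y - z‖)
    (x : EuclideanSpace ℝ (Fin n)) (hx : x ∈ Ω)
    (d : Fin p → EuclideanSpace ℝ (Fin n))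
    (hfeas : ∀ i, x + d i ∈ Ω)
    (hPSS : ∀ v : EuclideanSpace ℝ (Fin n), x + v ∈ Ω → ‖v‖ ≤ α →
      ∃ c : Fin p → ℝ, (∀ i, 0 ≤ c i) ∧ v = ∑ i, c i • d i ∧ ∑ i, c i ≤ Λ)
    (hnorm : ∀ i, ‖d i‖ ≤ dmax * α)
    (π : ℝ)
    (hπ : π = |sInf {r : ℝ | ∃ v : EuclideanSpace ℝ (Fin n),
      x + v ∈ Ω ∧ ‖v‖ ≤ 1 ∧ r = ⟪gradient f x, v⟫}|)
    (hsmall : α < min (2 * π / ((L * dmax ^ 2 + σ) * Λ)) 1) :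
    ∃ i, x + d i ∈ Ω ∧ f (x + d i) < f x - σ / 2 * α ^ 2 := by
  set C := L * dmax ^ 2 + σ
  have hCΛ : 0 < C * Λ := by positivity
  have hα1 : α < 1 := hsmall.trans_le (min_le_right _ _)
  have hαπ : α * (C * Λ) / 2 < criticality Ω x (gradient f x) := by
    have := (lt_div_iff₀ hCΛ).1 (hsmall.trans_le (min_le_left _ _))
    rw [criticality, ← hπ]
    linarith
  obtain ⟨v, hv, hv1, hgv⟩ := exists_inner_lt_neg_of_lt_criticality hx hαπ
  obtain ⟨i, hi⟩ := exists_inner_le_of_spans_feasible_ball hconv hx hα hα1.le hPSS hv hv1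
    (hgv.trans_le (neg_nonpos.2 (by positivity)))
  refine ⟨i, hfeas i, ?_⟩
  have hdesc :=
    le_add_inner_gradient_add_sq_of_lipschitz (hf.differentiable one_ne_zero) hlip x (d i)
  have hslope : ⟪gradient f x, d i⟫ < -(C * α ^ 2 / 2) := by
    refine lt_of_mul_lt_mul_left (hi.trans_lt ?_) hΛ.le
    nlinarith
  have hdi : L / 2 * ‖d i‖ ^ 2 ≤ L / 2 * (dmax * α) ^ 2 := by
    gcongr
    exact hnorm i
  linarith

/-- Success of a polling step on a Λ-PSS for B(x,α) ∩ Ω: if f is C¹ with L-Lipschitz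
gradient, Ω is closed convex, π(x) ≠ 0 and α < min(2π(x)/((L d_max² + σ)Λ), 1), then
some feasible poll point achieves sufficient decrease. -/
theorem lambda_pss_success_constrained (n p : ℕ)
    (Ω : Set (EuclideanSpace ℝ (Fin n))) (hconv : Convex ℝ Ω) (hclosed : IsClosed Ω)
    (f : EuclideanSpace ℝ (Fin n) → ℝ) (L σ Λ dmax α : ℝ)
    (hL : 0 < L) (hσ : 0 < σ) (hΛ : 0 < Λ) (hdmax : 0 < dmax) (hα : 0 < α)
    (hf : ContDiff ℝ 1 f)
    (hlip : ∀ y z : EuclideanSpace ℝ (Fin n),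
      ‖gradient f y - gradient f z‖ ≤ L * ‖y - z‖)
    (x : EuclideanSpace ℝ (Fin n)) (hx : x ∈ Ω)
    (d : Fin p → EuclideanSpace ℝ (Fin n))
    (hfeas : ∀ i, x + d i ∈ Ω)
    (hPSS : ∀ v : EuclideanSpace ℝ (Fin n), x + v ∈ Ω → ‖v‖ ≤ α →
      ∃ c : Fin p → ℝ, (∀ i, 0 ≤ c i) ∧ v = ∑ i, c i • d i ∧ ∑ i, c i ≤ Λ)
    (hnorm : ∀ i, ‖d i‖ ≤ dmax * α)
    (π : ℝ)
    (hπ : π = |sInf {r : ℝ | ∃ v : EuclideanSpace ℝ (Fin n),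
      x + v ∈ Ω ∧ ‖v‖ ≤ 1 ∧ r = ⟪gradient f x, v⟫}|)
    (hπne : π ≠ 0)
    (hsmall : α < min (2 * π / ((L * dmax ^ 2 + σ) * Λ)) 1) :
    ∃ i, x + d i ∈ Ω ∧ f (x + d i) < f x - σ / 2 * α ^ 2 :=
  lambda_pss_success_constrained_general n p Ω hconv f L σ Λ dmax α hL hσ hΛ hα hf hlip x hx d hfeas
    hPSS hnorm π hπ hsmall
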